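/- Let K be a field and q ∈ K an element that is not a root of unity. Let M be the C(q)-module with K-basis {v_n : n ∈ ℕ} ∪ {w_n : n ∈ ℕ} and action a·v_0 = 0, a·v_n = ((qⁿ−1)/(q−1))·v_{n−1} for n ≥ 1, b·v_n = v_{n+1}, a·w_n = qⁿ(w_n + w_{n+1}), b·w_n = (q^{−n}/(1−q))·w_n + (−1)ⁿ v_0. Then V = span_K{v_n : n ∈ ℕ} is a C(q)-submodule of M and V is a simple C(q)-module. -/

import Mathlib

/-!
`V` is stable under the generators `a` (lowering) and `b` (raising), hence under all of `C(q)`.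
For simplicity of `V`, let `0 ≠ x = ∑_{n ≤ N} dₙ vₙ` with `d_N ≠ 0` in a submodule `W ≤ V`. Since
`a vₙ = [n]_q v_{n-1}` with `[n]_q = (qⁿ - 1)/(q - 1) ≠ 0` (as `q` is not a root of unity), `a^N x`
is a nonzero multiple of `v₀`, so `v₀ ∈ W`; then `vₙ = bⁿ v₀ ∈ W` for all `n`, i.e. `W = V`.
-/

noncomputable section

open FreeAlgebra

/-- Defining relation of the quantized Weyl algebra `C(q)`: `a * b = q • (b * a) + 1`,
where `ι K 0` plays the role of `a` and `ι K 1` plays the role of `b`. -/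
inductive QuantizedWeylRel (K : Type) [Field K] (q : K) :
    FreeAlgebra K (Fin 2) → FreeAlgebra K (Fin 2) → Prop
  | rel : QuantizedWeylRel K q (ι K (0 : Fin 2) * ι K (1 : Fin 2))
      (q • (ι K (1 : Fin 2) * ι K (0 : Fin 2)) + 1)

/-- The quantized Weyl algebra `C(q)`. -/
abbrev QuantizedWeyl (K : Type) [Field K] (q : K) : Type :=
  RingQuot (QuantizedWeylRel K q)

/-- The generator `a` of the quantized Weyl algebra. -/
def QuantizedWeyl.a (K : Type) [Field K] (q : K) : QuantizedWeyl K q :=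
  RingQuot.mkAlgHom K (QuantizedWeylRel K q) (ι K (0 : Fin 2))

/-- The generator `b` of the quantized Weyl algebra. -/
def QuantizedWeyl.b (K : Type) [Field K] (q : K) : QuantizedWeyl K q :=
  RingQuot.mkAlgHom K (QuantizedWeylRel K q) (ι K (1 : Fin 2))

open Submodule Set

theorem QuantizedWeyl.adjoin_a_b (K : Type) [Field K] (q : K) :
    Algebra.adjoin K {QuantizedWeyl.a K q, QuantizedWeyl.b K q} = ⊤ := by
  have hab : RingQuot.mkAlgHom K (QuantizedWeylRel K q) '' range (ι K) =
      {QuantizedWeyl.a K q, QuantizedWeyl.b K q} := by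
    ext
    simp [Fin.exists_fin_two, QuantizedWeyl.a, QuantizedWeyl.b, eq_comm]
  rw [← hab, ← AlgHom.map_adjoin, adjoin_range_ι, Algebra.map_top,
    (AlgHom.range_eq_top _).mpr (RingQuot.mkAlgHom_surjective K _)]

section

variable {K A M : Type*} [CommSemiring K] [Semiring A] [Algebra K A] [AddCommMonoid M]
  [Module K M] [Module A M] [IsScalarTower K A M]

theorem Submodule.exists_coe_eq_of_adjoin_eq_top {s : Set A} (hs : Algebra.adjoin K s = ⊤)
    (V : Submodule K M) (hV : ∀ r ∈ s, ∀ x ∈ V, r • x ∈ V) :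
    ∃ W : Submodule A M, (W : Set M) = V := by
  refine ⟨{ V with smul_mem' := fun r x hx => ?_ }, rfl⟩
  have hr : r ∈ Algebra.adjoin K s := hs ▸ Algebra.mem_top
  induction hr using Algebra.adjoin_induction generalizing x with
  | mem r hr => exact hV r hr x hx
  | algebraMap k => exact (algebraMap_smul A k x).symm ▸ V.smul_mem k hx
  | add r r' _ _ ih ih' => exact (add_smul r r' x).symm ▸ V.add_mem (ih x hx) (ih' x hx)
  | mul r r' _ _ ih ih' => exact (mul_smul r r' x).symm ▸ ih _ (ih' x hx)

theorem Submodule.smul_mem_span_range {ι : Type*} {v : ι → M} (r : A)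
    (h : ∀ i, r • v i ∈ span K (range v)) {x : M} (hx : x ∈ span K (range v)) :
    r • x ∈ span K (range v) :=
  (span_le (p := (span K (range v)).comap (DistribSMul.toLinearMap K M r))).mpr
    (range_subset_iff.mpr h) hx

theorem Submodule.span_range_le_restrictScalars_of_raising (b : A) {v : ℕ → M}
    (hb : ∀ n, b • v n = v (n + 1)) {W : Submodule A M} (h0 : v 0 ∈ W) :
    span K (range v) ≤ W.restrictScalars K := by
  refine span_le.mpr (range_subset_iff.mpr fun n => ?_)
  induction n with
  | zero => exact h0
  | succ n ih => exact hb n ▸ W.smul_mem b ih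

theorem Submodule.exists_sum_range_eq_of_mem_span_range {v : ℕ → M} {x : M}
    (hx : x ∈ span K (range v)) (hx0 : x ≠ 0) :
    ∃ N : ℕ, ∃ d : ℕ → K, d N ≠ 0 ∧ ∑ n ∈ Finset.range (N + 1), d n • v n = x := by
  obtain ⟨d, rfl⟩ := Finsupp.mem_span_range_iff_exists_finsupp.mp hx
  have hd : d.support.Nonempty := Finsupp.support_nonempty_iff.mpr (by rintro rfl; simp at hx0)
  refine ⟨d.support.max' hd, d, Finsupp.mem_support_iff.mp (d.support.max'_mem hd), ?_⟩
  refine (Finset.sum_subset (fun n hn => ?_) (fun n _ hn => ?_)).symm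
  · exact Finset.mem_range_succ_iff.mpr (d.support.le_max' n hn)
  · rw [Finsupp.notMem_support_iff.mp hn, zero_smul]

theorem smul_sum_range_of_lowering (a : A) {v : ℕ → M} {c : ℕ → K}
    (ha0 : a • v 0 = 0) (ha : ∀ n, a • v (n + 1) = c n • v n) (N : ℕ) (d : ℕ → K) :
    a • ∑ n ∈ Finset.range (N + 2), d n • v n =
      ∑ n ∈ Finset.range (N + 1), (d (n + 1) * c n) • v n := by
  rw [Finset.sum_range_succ', smul_add, smul_comm a, ha0, smul_zero, add_zero, Finset.smul_sum]
  simp only [smul_comm a, ha, smul_smul]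

end

section

variable {K A M : Type*} [Field K] [Ring A] [Algebra K A] [AddCommGroup M]
  [Module K M] [Module A M] [IsScalarTower K A M]

theorem Submodule.mem_of_sum_range_mem_of_lowering (a : A) {v : ℕ → M} {c : ℕ → K}
    (hc : ∀ n, c n ≠ 0) (ha0 : a • v 0 = 0) (ha : ∀ n, a • v (n + 1) = c n • v n)
    {W : Submodule A M} (N : ℕ) (d : ℕ → K) (hd : d N ≠ 0)
    (hW : ∑ n ∈ Finset.range (N + 1), d n • v n ∈ W) : v 0 ∈ W := by
  induction N generalizing d with
  | zero => simpa [hd] using W.smul_of_tower_mem (d 0)⁻¹ hW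
  | succ N ih =>
    refine ih (fun n => d (n + 1) * c n) (mul_ne_zero hd (hc N)) ?_
    rw [← smul_sum_range_of_lowering a ha0 ha]
    exact W.smul_mem a hW

theorem isSimpleModule_of_lowering_of_raising (a b : A) {v : ℕ → M} {c : ℕ → K}
    (hc : ∀ n, c n ≠ 0) (ha0 : a • v 0 = 0) (ha : ∀ n, a • v (n + 1) = c n • v n)
    (hb : ∀ n, b • v n = v (n + 1)) (hv0 : v 0 ≠ 0)
    (V : Submodule A M) (hV : (V : Set M) = span K (range v)) : IsSimpleModule A V := by
  have hmem : ∀ {x}, x ∈ V ↔ x ∈ span K (range v) := fun {x} => Set.ext_iff.mp hV x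
  rw [isSimpleModule_iff_isAtom, isAtom_iff_le_of_ge]
  refine ⟨fun hbot => hv0 ?_, fun W hW hWV => ?_⟩
  · simpa [hbot] using hmem.mpr (subset_span ⟨0, rfl⟩)
  obtain ⟨x, hxW, hx0⟩ := W.exists_mem_ne_zero_of_ne_bot hW
  obtain ⟨N, d, hd, rfl⟩ := exists_sum_range_eq_of_mem_span_range (hmem.mp (hWV hxW)) hx0
  have h0 := mem_of_sum_range_mem_of_lowering a hc ha0 ha N d hd hxW
  exact fun y hy => span_range_le_restrictScalars_of_raising b hb h0 (hmem.mp hy)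

end

theorem quantizedWeyl_V_isSimple_general (K : Type) [Field K] (q : K)
    (hq : ∀ k : ℕ, 0 < k → q ^ k ≠ 1)
    (M : Type) [AddCommGroup M] [Module K M] [Module (QuantizedWeyl K q) M]
    [IsScalarTower K (QuantizedWeyl K q) M]
    (bas : Module.Basis (ℕ ⊕ ℕ) K M)
    (ha0 : QuantizedWeyl.a K q • bas (Sum.inl 0) = (0 : M))
    (hav : ∀ n : ℕ, QuantizedWeyl.a K q • bas (Sum.inl (n + 1)) =
      ((q ^ (n + 1) - 1) / (q - 1)) • bas (Sum.inl n))
    (hbv : ∀ n : ℕ, QuantizedWeyl.b K q • bas (Sum.inl n) = bas (Sum.inl (n + 1)))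
    :
    ∃ V : Submodule (QuantizedWeyl K q) M,
      (V : Set M) = (Submodule.span K (Set.range fun n : ℕ => bas (Sum.inl n)) :
        Submodule K M) ∧
      IsSimpleModule (QuantizedWeyl K q) V := by
  set v : ℕ → M := fun n => bas (Sum.inl n)
  have hq1 : q ≠ 1 := by simpa using hq 1 one_pos
  have hc : ∀ n : ℕ, (q ^ (n + 1) - 1) / (q - 1) ≠ 0 := fun n =>
    div_ne_zero (sub_ne_zero.mpr (hq (n + 1) n.succ_pos)) (sub_ne_zero.mpr hq1)
  have hvV : ∀ n, v n ∈ span K (range v) := fun n => subset_span ⟨n, rfl⟩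
  obtain ⟨V, hV⟩ := exists_coe_eq_of_adjoin_eq_top (QuantizedWeyl.adjoin_a_b K q)
    (span K (range v)) <| by
      rintro r (rfl | rfl) x hx <;> refine smul_mem_span_range _ (fun n => ?_) hx
      · cases n with
        | zero => exact ha0 ▸ zero_mem _
        | succ n => exact (hav n).symm ▸ smul_mem _ _ (hvV n)
      · exact (hbv n).symm ▸ hvV (n + 1)
  exact ⟨V, hV, isSimpleModule_of_lowering_of_raising _ _ hc ha0 hav hbv (bas.ne_zero _) V hV⟩

/-- Let `M` be the `C(q)`-module (`q` not a root of unity) with `K`-basis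
`{v_n} ∪ {w_n}` and action `a·v_0 = 0`, `a·v_n = ((qⁿ-1)/(q-1))·v_{n-1}`,
`b·v_n = v_{n+1}`, `a·w_n = qⁿ(w_n + w_{n+1})`, `b·w_n = (q⁻ⁿ/(1-q))·w_n + (-1)ⁿ·v_0`.
Then the `K`-span `V` of `{v_n}` is a `C(q)`-submodule of `M` and is a simple
`C(q)`-module. -/
theorem quantizedWeyl_V_isSimple (K : Type) [Field K] (q : K) (hq0 : q ≠ 0)
    (hq : ∀ k : ℕ, 0 < k → q ^ k ≠ 1)
    (M : Type) [AddCommGroup M] [Module K M] [Module (QuantizedWeyl K q) M]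
    [IsScalarTower K (QuantizedWeyl K q) M]
    (bas : Module.Basis (ℕ ⊕ ℕ) K M)
    (ha0 : QuantizedWeyl.a K q • bas (Sum.inl 0) = (0 : M))
    (hav : ∀ n : ℕ, QuantizedWeyl.a K q • bas (Sum.inl (n + 1)) =
      ((q ^ (n + 1) - 1) / (q - 1)) • bas (Sum.inl n))
    (hbv : ∀ n : ℕ, QuantizedWeyl.b K q • bas (Sum.inl n) = bas (Sum.inl (n + 1)))
    (haw : ∀ n : ℕ, QuantizedWeyl.a K q • bas (Sum.inr n) =
      q ^ n • (bas (Sum.inr n) + bas (Sum.inr (n + 1))))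
    (hbw : ∀ n : ℕ, QuantizedWeyl.b K q • bas (Sum.inr n) =
      ((q ^ n)⁻¹ / (1 - q)) • bas (Sum.inr n) + ((-1 : K) ^ n) • bas (Sum.inl 0))
    :
    ∃ V : Submodule (QuantizedWeyl K q) M,
      (V : Set M) = (Submodule.span K (Set.range fun n : ℕ => bas (Sum.inl n)) :
        Submodule K M) ∧
      IsSimpleModule (QuantizedWeyl K q) V :=
  quantizedWeyl_V_isSimple_general K q hq M bas ha0 hav hbv

end
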